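/- Let t ∈ ℂ with t ≠ 1. Then for every 1 ≤ j ≤ N: ∏_{k=1, k≠j}^{N} (t·ω^j − ω^k)/(ω^j − ω^k) = (t^N − 1)/(N·(t − 1)); in particular this product is independent of j. -/

import Mathlib

/-!
Write `μ = ω^j` and let `ν` run over the other `N`-th roots of unity, which are exactly the
`ω^k`, `k ∈ {1,…,N} \ {j}`. Since `X^N - 1 = ∏_ν (X - ν)`, the numerator `∏_{ν ≠ μ} (tμ - ν)` is
`((tμ)^N - 1)/(tμ - μ) = (t^N - 1)/((t - 1)μ)`, while the denominator `∏_{ν ≠ μ} (μ - ν)` is the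
derivative `N μ^(N-1)` of `X^N - 1` at `μ`. As `μ^N = 1`, the quotient is `(t^N - 1)/(N(t - 1))`.
-/

open scoped BigOperators

noncomputable section

namespace Stmt18

/-- The primitive `N`-th root of unity `ω = exp(2πi/N)`. -/
def omega (N : ℕ) : ℂ := Complex.exp (2 * (Real.pi : ℂ) * Complex.I / (N : ℂ))

open Finset Polynomial

theorem _root_.Finset.image_erase_of_injOn {α β : Type*} [DecidableEq α] [DecidableEq β]
    {f : α → β} {s : Finset α} (hf : Set.InjOn f s) {a : α} (ha : a ∈ s) :
    (s.erase a).image f = (s.image f).erase (f a) := by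
  ext b
  simp only [mem_image, mem_erase]
  constructor
  · rintro ⟨x, ⟨hxa, hx⟩, rfl⟩
    exact ⟨fun h => hxa (hf hx ha h), x, hx, rfl⟩
  · rintro ⟨hb, x, hx, rfl⟩
    exact ⟨x, ⟨fun h => hb (h ▸ rfl), hx⟩, rfl⟩

theorem _root_.IsPrimitiveRoot.injOn_pow_Icc {M : Type*} [CommMonoid M] {ζ : M} {n : ℕ}
    (hζ : IsPrimitiveRoot ζ n) : Set.InjOn (ζ ^ ·) (Icc 1 n : Finset ℕ) := by
  intro a ha b hb hab
  simp only [coe_Icc, Set.mem_Icc] at ha hb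
  have hmod : a - 1 ≡ b - 1 [MOD n] := by
    refine Nat.ModEq.add_right_cancel' 1 ?_
    rw [Nat.sub_add_cancel ha.1, Nat.sub_add_cancel hb.1, hζ.eq_orderOf]
    exact (hζ.isOfFinOrder (by omega)).pow_eq_pow_iff_modEq.1 hab
  have := hmod.eq_of_lt_of_lt (by omega) (by omega)
  omega

theorem _root_.Polynomial.pos_of_mem_nthRootsFinset {R : Type*} [CommRing R] [IsDomain R]
    {n : ℕ} {a x : R} (hx : x ∈ nthRootsFinset n a) : 0 < n :=
  Nat.pos_of_ne_zero (by rintro rfl; simp at hx)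

section PrimitiveRoot

variable {K : Type*} [Field K] [DecidableEq K] {ζ μ : K} {n : ℕ}

theorem _root_.IsPrimitiveRoot.image_pow_Icc (hζ : IsPrimitiveRoot ζ n) :
    (Icc 1 n).image (ζ ^ ·) = nthRootsFinset n (1 : K) := by
  refine eq_of_subset_of_card_le (fun μ hμ => ?_) ?_
  · obtain ⟨k, hk, rfl⟩ := mem_image.1 hμ
    refine (mem_nthRootsFinset (by grind) 1).2 ?_
    rw [← pow_mul, mul_comm, pow_mul, hζ.pow_eq_one, one_pow]
  · rw [hζ.card_nthRootsFinset, card_image_of_injOn hζ.injOn_pow_Icc, Nat.card_Icc,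
      Nat.add_sub_cancel]

theorem _root_.IsPrimitiveRoot.mul_prod_nthRootsFinset_erase_sub (hζ : IsPrimitiveRoot ζ n)
    (hμ : μ ∈ nthRootsFinset n (1 : K)) (a : K) :
    (a - μ) * ∏ ν ∈ (nthRootsFinset n (1 : K)).erase μ, (a - ν) = a ^ n - 1 := by
  rw [mul_prod_erase _ (a - ·) hμ]
  simpa [eval_prod] using
    congrArg (eval a) (X_pow_sub_one_eq_prod (pos_of_mem_nthRootsFinset hμ) hζ).symm

theorem _root_.IsPrimitiveRoot.prod_nthRootsFinset_erase_sub_self (hζ : IsPrimitiveRoot ζ n)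
    (hμ : μ ∈ nthRootsFinset n (1 : K)) :
    ∏ ν ∈ (nthRootsFinset n (1 : K)).erase μ, (μ - ν) = n * μ ^ (n - 1) := by
  have hprod : (Multiset.map (X - C ·) (nthRootsFinset n (1 : K)).val).prod = X ^ n - 1 :=
    (X_pow_sub_one_eq_prod (pos_of_mem_nthRootsFinset hμ) hζ).symm
  have hderiv := eval_multiset_prod_X_sub_C_derivative (S := (nthRootsFinset n (1 : K)).val) hμ
  rw [hprod, derivative_sub, derivative_one, sub_zero, derivative_X_pow] at hderiv
  rw [prod_eq_multiset_prod, erase_val, ← hderiv]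
  simp

theorem _root_.IsPrimitiveRoot.prod_nthRootsFinset_erase_div {t : K} (hζ : IsPrimitiveRoot ζ n)
    (hμ : μ ∈ nthRootsFinset n (1 : K)) (ht : t ≠ 1) :
    ∏ ν ∈ (nthRootsFinset n (1 : K)).erase μ, (t * μ - ν) / (μ - ν)
      = (t ^ n - 1) / (n * (t - 1)) := by
  have hn := pos_of_mem_nthRootsFinset hμ
  have hμn : μ ^ n = 1 := (mem_nthRootsFinset hn 1).1 hμ
  have hnum : ∏ ν ∈ (nthRootsFinset n (1 : K)).erase μ, (t * μ - ν)
      = (t ^ n - 1) / ((t - 1) * μ) := by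
    refine eq_div_of_mul_eq
      (mul_ne_zero (sub_ne_zero.2 ht) (ne_zero_of_mem_nthRootsFinset one_ne_zero hμ)) ?_
    rw [mul_comm, sub_one_mul, hζ.mul_prod_nthRootsFinset_erase_sub hμ, mul_pow, hμn, mul_one]
  rw [prod_div_distrib, hnum, hζ.prod_nthRootsFinset_erase_sub_self hμ, div_div]
  have hμμ : μ * μ ^ (n - 1) = 1 := by rw [← pow_succ', Nat.sub_add_cancel hn, hμn]
  congr 1
  linear_combination (n * (t - 1) : K) * hμμ

end PrimitiveRoot

theorem evaluated_coefficient_general (N : ℕ) (t : ℂ) (ht : t ≠ 1)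
    (j : ℕ) (hj : j ∈ Finset.Icc 1 N) :
    ∏ k ∈ (Finset.Icc 1 N).erase j,
        (t * omega N ^ j - omega N ^ k) / (omega N ^ j - omega N ^ k)
      = (t ^ N - 1) / ((N : ℂ) * (t - 1)) := by
  classical
  have hω : IsPrimitiveRoot (omega N) N := Complex.isPrimitiveRoot_exp N (by grind)
  rw [← prod_image (f := fun ν => (t * omega N ^ j - ν) / (omega N ^ j - ν))
      (hω.injOn_pow_Icc.mono (coe_subset.2 (erase_subset j _))),
    image_erase_of_injOn hω.injOn_pow_Icc hj, hω.image_pow_Icc]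
  exact hω.prod_nthRootsFinset_erase_div (hω.image_pow_Icc ▸ mem_image_of_mem _ hj) ht

/-- For `t ≠ 1` and `1 ≤ j ≤ N`:
`∏_{k≠j} (t·ω^j − ω^k)/(ω^j − ω^k) = (t^N − 1)/(N·(t − 1))`; in particular the product is
independent of `j`. -/
theorem evaluated_coefficient (N : ℕ) (hN : 0 < N) (t : ℂ) (ht : t ≠ 1)
    (j : ℕ) (hj : j ∈ Finset.Icc 1 N) :
    ∏ k ∈ (Finset.Icc 1 N).erase j,
        (t * omega N ^ j - omega N ^ k) / (omega N ^ j - omega N ^ k)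
      = (t ^ N - 1) / ((N : ℂ) * (t - 1)) :=
  evaluated_coefficient_general N t ht j hj

end Stmt18
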